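/- arXiv:1108.2169 — 4 statements merged into one kernel-verified Lean document; each statement's English description precedes it below -/
import Mathlib

section
/- A Borel probability measure μ on ℝ^N is a probabilistic frame (i.e., there exist 0 < A ≤ B < ∞ with A‖x‖² ≤ ∫ ⟨x,y⟩² dμ(y) ≤ B‖x‖² for all x) if and only if μ has finite second moment and the linear span of its support is all of ℝ^N. -/
open MeasureTheory
open scoped RealInnerProductSpace ENNReal

/-- The support of a measure: points all of whose open neighborhoods have
positive measure. -/
def measSupport {N : ℕ} (μ : Measure (EuclideanSpace ℝ (Fin N))) :
    Set (EuclideanSpace ℝ (Fin N)) :=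
  {x | ∀ U : Set (EuclideanSpace ℝ (Fin N)), IsOpen U → x ∈ U → 0 < μ U}

/-! Everything is read off the quadratic form `Q x = ∫ ⟪x, y⟫² dμ(y)`. Cauchy–Schwarz bounds it
by `M₂²(μ) ‖x‖²`, and summing it over an orthonormal basis gives back `M₂²(μ)`. It vanishes at `x`
exactly when `μ` is carried by the hyperplane `x⊥`, i.e. when `x` is orthogonal to the support; so
on a spanning support it is positive on the unit sphere, and compactness of the sphere together
with 2-homogeneity gives the lower frame bound. -/

theorem measSupport_eq_support {N : ℕ} (μ : Measure (EuclideanSpace ℝ (Fin N))) :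
    measSupport μ = μ.support := by
  simp only [measSupport, Measure.support_eq_forall_isOpen]
  grind

section FrameForm

variable {E : Type*} [NormedAddCommGroup E] [InnerProductSpace ℝ E]

theorem mem_orthogonal_span_iff {s : Set E} {x : E} :
    x ∈ (Submodule.span ℝ s)ᗮ ↔ ∀ y ∈ s, ⟪x, y⟫ = 0 := by
  rw [Submodule.mem_orthogonal']
  exact ⟨fun h y hy => h y (Submodule.subset_span hy),
    fun h => Submodule.span_le (p := LinearMap.ker (innerₛₗ ℝ x)) |>.mpr h⟩

theorem real_inner_sq_le_norm_sq_mul_norm_sq (x y : E) : ⟪x, y⟫ ^ 2 ≤ ‖x‖ ^ 2 * ‖y‖ ^ 2 := by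
  rw [← mul_pow, ← sq_abs]
  exact pow_le_pow_left₀ (abs_nonneg _) (abs_real_inner_le_norm x y) 2

variable [MeasurableSpace E] {μ : Measure E}

theorem measure_inner_ne_zero_eq_zero_iff [HereditarilyLindelofSpace E] (x : E) :
    μ {y | ⟪x, y⟫ ≠ 0} = 0 ↔ ∀ y ∈ μ.support, ⟪x, y⟫ = 0 := by
  have hopen : IsOpen {y : E | ⟪x, y⟫ ≠ 0} := isOpen_ne_fun (by fun_prop) (by fun_prop)
  constructor
  · intro hnull y hy
    by_contra hxy
    exact ((Measure.mem_support_iff_forall y).mp hy _ (hopen.mem_nhds hxy)).ne' hnull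
  · intro horth
    exact measure_mono_null (fun y hxy hy => hxy (horth y hy)) Measure.measure_compl_support

theorem integral_inner_sq_eq_zero_iff {x : E} (h : Integrable (fun y => ⟪x, y⟫ ^ 2) μ) :
    ∫ y, ⟪x, y⟫ ^ 2 ∂μ = 0 ↔ μ {y | ⟪x, y⟫ ≠ 0} = 0 := by
  rw [integral_eq_zero_iff_of_nonneg (fun y => sq_nonneg _) h, Filter.EventuallyEq, ae_iff]
  simp

theorem integral_inner_smul_left_sq (c : ℝ) (x : E) :
    ∫ y, ⟪c • x, y⟫ ^ 2 ∂μ = c ^ 2 * ∫ y, ⟪x, y⟫ ^ 2 ∂μ := by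
  simp_rw [← integral_const_mul, real_inner_smul_left, mul_pow]

theorem integrable_norm_sq_of_integrable_inner_sq [FiniteDimensional ℝ E]
    (h : ∀ x : E, Integrable (fun y => ⟪x, y⟫ ^ 2) μ) :
    Integrable (fun y : E => ‖y‖ ^ 2) μ := by
  let b := stdOrthonormalBasis ℝ E
  simpa only [b.sum_sq_inner_right] using integrable_finsetSum Finset.univ fun i _ => h (b i)

variable [BorelSpace E]

theorem integrable_inner_sq (h : Integrable (fun y : E => ‖y‖ ^ 2) μ) (x : E) :
    Integrable (fun y => ⟪x, y⟫ ^ 2) μ := by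
  refine (h.const_mul (‖x‖ ^ 2)).mono' (by fun_prop) (.of_forall fun y => ?_)
  rw [Real.norm_of_nonneg (sq_nonneg _)]
  exact real_inner_sq_le_norm_sq_mul_norm_sq x y

theorem integral_inner_sq_le (h : Integrable (fun y : E => ‖y‖ ^ 2) μ) (x : E) :
    ∫ y, ⟪x, y⟫ ^ 2 ∂μ ≤ (∫ y, ‖y‖ ^ 2 ∂μ) * ‖x‖ ^ 2 := by
  calc ∫ y, ⟪x, y⟫ ^ 2 ∂μ ≤ ∫ y, ‖x‖ ^ 2 * ‖y‖ ^ 2 ∂μ :=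
        integral_mono (integrable_inner_sq h x) (h.const_mul _)
          (real_inner_sq_le_norm_sq_mul_norm_sq x)
    _ = (∫ y, ‖y‖ ^ 2 ∂μ) * ‖x‖ ^ 2 := by rw [integral_const_mul, mul_comm]

theorem continuousOn_integral_inner_sq (h : Integrable (fun y : E => ‖y‖ ^ 2) μ) :
    ContinuousOn (fun x => ∫ y, ⟪x, y⟫ ^ 2 ∂μ) (Metric.sphere 0 1) := by
  refine continuousOn_of_dominated (fun x _ => by fun_prop) (fun x hx => .of_forall fun y => ?_)
    h (.of_forall fun y => by fun_prop)
  rw [Real.norm_of_nonneg (sq_nonneg _)]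
  simpa [mem_sphere_zero_iff_norm.mp hx] using real_inner_sq_le_norm_sq_mul_norm_sq x y

end FrameForm

theorem exists_pos_mul_norm_sq_le {E : Type*} [NormedAddCommGroup E] [NormedSpace ℝ E]
    [FiniteDimensional ℝ E] {f : E → ℝ} (hsmul : ∀ (c : ℝ) x, f (c • x) = c ^ 2 * f x)
    (hcont : ContinuousOn f (Metric.sphere 0 1)) (hpos : ∀ x ≠ 0, 0 < f x) :
    ∃ A > 0, ∀ x, A * ‖x‖ ^ 2 ≤ f x := by
  obtain ⟨A, hA, hAle⟩ := (isCompact_sphere (0 : E) 1).exists_forall_le' hcont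
    fun x hx => hpos x (ne_zero_of_mem_unit_sphere ⟨x, hx⟩)
  refine ⟨A, hA, fun x => ?_⟩
  rcases eq_or_ne x 0 with rfl | hx
  · simpa using (hsmul 0 0).ge
  have hnorm : ‖x‖ ≠ 0 := norm_ne_zero_iff.mpr hx
  calc A * ‖x‖ ^ 2 ≤ f (‖x‖⁻¹ • x) * ‖x‖ ^ 2 := by
        gcongr
        exact hAle _ (by simp [norm_smul, hnorm])
    _ = f x := by
        rw [hsmul]
        field_simp

theorem stmt0_general {N : ℕ} (μ : Measure (EuclideanSpace ℝ (Fin N))) :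
    (∃ A B : ℝ, 0 < A ∧ A ≤ B ∧ ∀ x : EuclideanSpace ℝ (Fin N),
        A * ‖x‖ ^ 2 ≤ ∫ y, ⟪x, y⟫ ^ 2 ∂μ ∧ ∫ y, ⟪x, y⟫ ^ 2 ∂μ ≤ B * ‖x‖ ^ 2) ↔
    (Integrable (fun y : EuclideanSpace ℝ (Fin N) => ‖y‖ ^ 2) μ ∧
      Submodule.span ℝ (measSupport μ) = ⊤) := by
  rw [measSupport_eq_support, ← Submodule.orthogonal_eq_bot_iff, Submodule.eq_bot_iff]
  simp_rw [mem_orthogonal_span_iff, ← measure_inner_ne_zero_eq_zero_iff]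
  constructor
  · rintro ⟨A, B, hA, -, hbounds⟩
    have hint : ∀ x, Integrable (fun y => ⟪x, y⟫ ^ 2) μ := by
      intro x
      rcases eq_or_ne x 0 with rfl | hx
      · simp
      exact .of_integral_ne_zero ((hbounds x).1.trans_lt' (by positivity)).ne'
    refine ⟨integrable_norm_sq_of_integrable_inner_sq hint, fun x hnull => ?_⟩
    by_contra hx
    have hlower := (hbounds x).1
    rw [(integral_inner_sq_eq_zero_iff (hint x)).mpr hnull] at hlower
    exact hlower.not_gt (by positivity)
  · rintro ⟨hmoment, horth⟩
    have hpos : ∀ x ≠ 0, 0 < ∫ y, ⟪x, y⟫ ^ 2 ∂μ := fun x hx =>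
      (integral_nonneg fun y => sq_nonneg _).lt_of_ne' fun h0 =>
        hx (horth x ((integral_inner_sq_eq_zero_iff (integrable_inner_sq hmoment x)).mp h0))
    obtain ⟨A, hA, hlower⟩ := exists_pos_mul_norm_sq_le (integral_inner_smul_left_sq (μ := μ))
      (continuousOn_integral_inner_sq hmoment) hpos
    refine ⟨A, max A (∫ y, ‖y‖ ^ 2 ∂μ), hA, le_max_left _ _, fun x => ⟨hlower x, ?_⟩⟩
    exact (integral_inner_sq_le hmoment x).trans (by gcongr; exact le_max_right _ _)

theorem stmt0 {N : ℕ} (μ : Measure (EuclideanSpace ℝ (Fin N)))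
    [IsProbabilityMeasure μ] :
    (∃ A B : ℝ, 0 < A ∧ A ≤ B ∧ ∀ x : EuclideanSpace ℝ (Fin N),
        A * ‖x‖ ^ 2 ≤ ∫ y, ⟪x, y⟫ ^ 2 ∂μ ∧ ∫ y, ⟪x, y⟫ ^ 2 ∂μ ≤ B * ‖x‖ ^ 2) ↔
    (Integrable (fun y : EuclideanSpace ℝ (Fin N) => ‖y‖ ^ 2) μ ∧
      Submodule.span ℝ (measSupport μ) = ⊤) :=
  stmt0_general μ
end

section
/- Let μ be a probabilistic frame on ℝ^{N₁} with bounds A_μ, B_μ and ν a probabilistic frame on ℝ^{N₂} with bounds A_ν, B_ν, and suppose at least one of μ, ν has zero mean. Then the product measure μ ⊗ ν is a probabilistic frame on ℝ^{N₁} × ℝ^{N₂} with lower bound min(A_μ, A_ν) and upper bound max(B_μ, B_ν). -/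
open MeasureTheory
open scoped RealInnerProductSpace

/-!
Expanding the square, the frame integral of `μ ⊗ ν` at `(z₁, z₂)` is the sum of the frame
integrals of `μ` at `z₁` and of `ν` at `z₂`, plus the cross term
`2 (∫ ⟪z₁, y⟫ dμ) (∫ ⟪z₂, y⟫ dν)`, which vanishes as soon as one of the two means is zero.
The positive lower frame bounds guarantee the square integrability that this expansion needs.
-/

section InnerProductSpace

variable {E : Type*} [NormedAddCommGroup E] [InnerProductSpace ℝ E] [MeasurableSpace E]
  {μ : Measure E}

/-- A non-integrable function has Bochner integral `0`, so a positive lower frame bound forces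
`⟪x, ·⟫ ^ 2` to be integrable. -/
theorem memLp_two_inner_of_lower_frame_bound [OpensMeasurableSpace E] {A : ℝ} (hA : 0 < A)
    (h : ∀ x : E, A * ‖x‖ ^ 2 ≤ ∫ y, ⟪x, y⟫ ^ 2 ∂μ) (x : E) :
    MemLp (fun y => ⟪x, y⟫) 2 μ := by
  refine (memLp_two_iff_integrable_sq (f := fun y => ⟪x, y⟫)
    (by fun_prop : Continuous fun y => ⟪x, y⟫).aestronglyMeasurable).2 ?_
  by_contra hx
  have hx₀ : x ≠ 0 := by rintro rfl; simp at hx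
  have hbound := h x
  rw [integral_undef hx] at hbound
  have hpos : 0 < A * ‖x‖ ^ 2 := by positivity
  linarith

theorem integrable_id_of_integrable_inner [FiniteDimensional ℝ E]
    (h : ∀ x : E, Integrable (fun y => ⟪x, y⟫) μ) : Integrable id μ := by
  let b := stdOrthonormalBasis ℝ E
  have hid : (id : E → E) = fun y => ∑ i, ⟪b i, y⟫ • b i := funext fun y => (b.sum_repr' y).symm
  rw [hid]
  exact integrable_finsetSum _ fun i _ => (h (b i)).smul_const (b i)

theorem integral_inner_eq_zero_of_integral_id_eq_zero [FiniteDimensional ℝ E]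
    (h : ∀ x : E, Integrable (fun y => ⟪x, y⟫) μ) (hmean : ∫ y, y ∂μ = 0) (x : E) :
    ∫ y, ⟪x, y⟫ ∂μ = 0 := by
  rw [integral_inner (f := fun y => y) (integrable_id_of_integrable_inner h) x, hmean,
    inner_zero_right]

end InnerProductSpace

theorem integral_prod_add_sq {α β : Type*} [MeasurableSpace α] [MeasurableSpace β]
    {μ : Measure α} {ν : Measure β} [IsProbabilityMeasure μ] [IsProbabilityMeasure ν]
    {f : α → ℝ} {g : β → ℝ} (hf : MemLp f 2 μ) (hg : MemLp g 2 ν) :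
    ∫ p, (f p.1 + g p.2) ^ 2 ∂(μ.prod ν) =
      ∫ x, f x ^ 2 ∂μ + ∫ y, g y ^ 2 ∂ν + 2 * ((∫ x, f x ∂μ) * ∫ y, g y ∂ν) := by
  have hf₁ : Integrable f μ := hf.integrable one_le_two
  have hg₁ : Integrable g ν := hg.integrable one_le_two
  have h₁ := hf.integrable_sq.mul_prod (integrable_const (1 : ℝ) (μ := ν))
  have h₂ := (hf₁.const_mul 2).mul_prod hg₁
  have h₃ := (integrable_const (1 : ℝ) (μ := μ)).mul_prod hg.integrable_sq
  have h₂₃ : Integrable (fun p : α × β => 2 * f p.1 * g p.2 + 1 * g p.2 ^ 2) (μ.prod ν) :=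
    h₂.add h₃
  -- the factors `1` give every term the shape `F p.1 * G p.2` of `integral_prod_mul`
  have hexpand : (fun p : α × β => (f p.1 + g p.2) ^ 2) =
      fun p => f p.1 ^ 2 * 1 + (2 * f p.1 * g p.2 + 1 * g p.2 ^ 2) := by
    funext p; ring
  rw [hexpand, integral_add h₁ h₂₃, integral_add h₂ h₃,
    integral_prod_mul (fun x => f x ^ 2) (fun _ => (1 : ℝ)),
    integral_prod_mul (fun x => 2 * f x) g,
    integral_prod_mul (fun _ => (1 : ℝ)) (fun y => g y ^ 2), integral_const_mul]
  simp only [integral_const, probReal_univ, smul_eq_mul, mul_one, one_mul]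
  ring

theorem stmt9 {N₁ N₂ : ℕ}
    (μ : Measure (EuclideanSpace ℝ (Fin N₁)))
    (ν : Measure (EuclideanSpace ℝ (Fin N₂)))
    [IsProbabilityMeasure μ] [IsProbabilityMeasure ν]
    (Aμ Bμ Aν Bν : ℝ) (hAμ : 0 < Aμ) (hAν : 0 < Aν)
    (hμ : ∀ x : EuclideanSpace ℝ (Fin N₁),
      Aμ * ‖x‖ ^ 2 ≤ ∫ y, ⟪x, y⟫ ^ 2 ∂μ ∧ ∫ y, ⟪x, y⟫ ^ 2 ∂μ ≤ Bμ * ‖x‖ ^ 2)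
    (hν : ∀ x : EuclideanSpace ℝ (Fin N₂),
      Aν * ‖x‖ ^ 2 ≤ ∫ y, ⟪x, y⟫ ^ 2 ∂ν ∧ ∫ y, ⟪x, y⟫ ^ 2 ∂ν ≤ Bν * ‖x‖ ^ 2)
    (hmean : (∫ y, y ∂μ) = 0 ∨ (∫ y, y ∂ν) = 0) :
    ∀ z : EuclideanSpace ℝ (Fin N₁) × EuclideanSpace ℝ (Fin N₂),
      min Aμ Aν * (‖z.1‖ ^ 2 + ‖z.2‖ ^ 2) ≤
        ∫ p, (⟪z.1, p.1⟫ + ⟪z.2, p.2⟫) ^ 2 ∂(μ.prod ν) ∧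
      ∫ p, (⟪z.1, p.1⟫ + ⟪z.2, p.2⟫) ^ 2 ∂(μ.prod ν) ≤
        max Bμ Bν * (‖z.1‖ ^ 2 + ‖z.2‖ ^ 2) := by
  rintro ⟨z₁, z₂⟩
  have hLμ := memLp_two_inner_of_lower_frame_bound hAμ fun x => (hμ x).1
  have hLν := memLp_two_inner_of_lower_frame_bound hAν fun x => (hν x).1
  have hcross : (∫ y, ⟪z₁, y⟫ ∂μ) * (∫ y, ⟪z₂, y⟫ ∂ν) = 0 := by
    rcases hmean with hm | hm
    · rw [integral_inner_eq_zero_of_integral_id_eq_zero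
        (fun x => (hLμ x).integrable one_le_two) hm, zero_mul]
    · rw [integral_inner_eq_zero_of_integral_id_eq_zero
        (fun x => (hLν x).integrable one_le_two) hm, mul_zero]
  rw [integral_prod_add_sq (hLμ z₁) (hLν z₂), hcross, mul_zero, add_zero]
  have hn₁ : 0 ≤ ‖z₁‖ ^ 2 := by positivity
  have hn₂ : 0 ≤ ‖z₂‖ ^ 2 := by positivity
  constructor
  · nlinarith [(hμ z₁).1, (hν z₂).1, min_le_left Aμ Aν, min_le_right Aμ Aν]
  · nlinarith [(hμ z₁).2, (hν z₂).2, le_max_left Bμ Bν, le_max_right Bμ Bν]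
end

section
/- If μ and ν are tight probabilistic frames on ℝ^{N₁} and ℝ^{N₂} respectively, at least one having zero mean, and M₂²(μ)/N₁ = M₂²(ν)/N₂, then the product measure μ ⊗ ν is a tight probabilistic frame on ℝ^{N₁} × ℝ^{N₂}. -/
/-!
Expanding the square, the two diagonal terms integrate to `Aμ ‖z₁‖² + Aν ‖z₂‖²` by the frame
identities, and by Fubini the cross term is `2 ⟪z₁, ∫ μ⟫ ⟪z₂, ∫ ν⟫ = 0`. Taking the trace of a
frame identity over an orthonormal basis gives `M₂²(μ) = N₁ Aμ`, so the moment hypothesis forces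
`Aμ = Aν` whenever both dimensions are positive; if one of them is zero, the other bound works.
-/

open MeasureTheory
open scoped RealInnerProductSpace

section TightFrame

variable {E : Type*} [NormedAddCommGroup E] [InnerProductSpace ℝ E] [MeasurableSpace E]

def IsTightFrame (μ : Measure E) (A : ℝ) : Prop :=
  ∀ x : E, ∫ y, ⟪x, y⟫ ^ 2 ∂μ = A * ‖x‖ ^ 2

namespace IsTightFrame

variable {μ : Measure E} {A : ℝ}

theorem integrable_inner_sq (hμ : IsTightFrame μ A) (hA : 0 < A) (x : E) :
    Integrable (fun y => ⟪x, y⟫ ^ 2) μ := by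
  rcases eq_or_ne x 0 with rfl | hx
  · simp
  by_contra h
  have hpos : 0 < A * ‖x‖ ^ 2 := by positivity
  rw [← hμ x, integral_undef h] at hpos
  exact hpos.false

theorem integral_norm_sq [FiniteDimensional ℝ E] (hμ : IsTightFrame μ A) (hA : 0 < A) :
    ∫ y, ‖y‖ ^ 2 ∂μ = Module.finrank ℝ E * A := by
  let b := stdOrthonormalBasis ℝ E
  simp_rw [← b.sum_sq_inner_right]
  rw [integral_finsetSum _ fun i _ => hμ.integrable_inner_sq hA (b i)]
  simp [hμ _, b.norm_eq_one]

variable [BorelSpace E]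

theorem integrable_inner [IsFiniteMeasure μ] (hμ : IsTightFrame μ A) (hA : 0 < A) (x : E) :
    Integrable (fun y => ⟪x, y⟫) μ :=
  ((memLp_two_iff_integrable_sq (continuous_const.inner continuous_id).aestronglyMeasurable).2
    (hμ.integrable_inner_sq hA x)).integrable one_le_two

theorem integrable_id [FiniteDimensional ℝ E] [IsFiniteMeasure μ] (hμ : IsTightFrame μ A)
    (hA : 0 < A) :
    Integrable (fun y : E => y) μ := by
  let b := stdOrthonormalBasis ℝ E
  have hexpand : (fun y : E => y) = fun y => ∑ i, ⟪b i, y⟫ • b i :=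
    funext fun y => (b.sum_repr' y).symm
  rw [hexpand]
  exact integrable_finsetSum _ fun i _ => (hμ.integrable_inner hA (b i)).smul_const (b i)

end IsTightFrame

variable {F : Type*} [NormedAddCommGroup F] [InnerProductSpace ℝ F] [MeasurableSpace F]
  [FiniteDimensional ℝ E] [BorelSpace E] [FiniteDimensional ℝ F] [BorelSpace F]
  {μ : Measure E} {ν : Measure F} {Aμ Aν : ℝ}

theorem integral_inner_mul_inner_prod [IsFiniteMeasure μ] [IsFiniteMeasure ν]
    (hμ : IsTightFrame μ Aμ) (hν : IsTightFrame ν Aν) (hAμ : 0 < Aμ) (hAν : 0 < Aν)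
    (x : E) (w : F) :
    ∫ p, ⟪x, p.1⟫ * ⟪w, p.2⟫ ∂(μ.prod ν) = ⟪x, ∫ y, y ∂μ⟫ * ⟪w, ∫ y, y ∂ν⟫ := by
  rw [integral_prod_mul (fun y => ⟪x, y⟫) (fun y => ⟪w, y⟫),
    ← integral_inner (hμ.integrable_id hAμ), ← integral_inner (hν.integrable_id hAν)]

theorem integral_inner_add_inner_sq_prod [IsProbabilityMeasure μ] [IsProbabilityMeasure ν]
    (hμ : IsTightFrame μ Aμ) (hν : IsTightFrame ν Aν) (hAμ : 0 < Aμ) (hAν : 0 < Aν)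
    (hmean : (∫ y, y ∂μ) = 0 ∨ (∫ y, y ∂ν) = 0) (z : E × F) :
    ∫ p, (⟪z.1, p.1⟫ + ⟪z.2, p.2⟫) ^ 2 ∂(μ.prod ν) = Aμ * ‖z.1‖ ^ 2 + Aν * ‖z.2‖ ^ 2 := by
  have hfst : Integrable (fun p : E × F => ⟪z.1, p.1⟫ ^ 2) (μ.prod ν) :=
    (hμ.integrable_inner_sq hAμ z.1).comp_fst ν
  have hsnd : Integrable (fun p : E × F => ⟪z.2, p.2⟫ ^ 2) (μ.prod ν) :=
    (hν.integrable_inner_sq hAν z.2).comp_snd μ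
  have hcross : Integrable (fun p : E × F => 2 * (⟪z.1, p.1⟫ * ⟪z.2, p.2⟫)) (μ.prod ν) :=
    ((hμ.integrable_inner hAμ z.1).mul_prod (hν.integrable_inner hAν z.2)).const_mul 2
  have hcross_zero : ∫ p, ⟪z.1, p.1⟫ * ⟪z.2, p.2⟫ ∂(μ.prod ν) = 0 := by
    rw [integral_inner_mul_inner_prod hμ hν hAμ hAν]
    rcases hmean with h | h <;> simp [h]
  calc ∫ p, (⟪z.1, p.1⟫ + ⟪z.2, p.2⟫) ^ 2 ∂(μ.prod ν)
      = ∫ p, (⟪z.1, p.1⟫ ^ 2 + 2 * (⟪z.1, p.1⟫ * ⟪z.2, p.2⟫) + ⟪z.2, p.2⟫ ^ 2) ∂(μ.prod ν) := by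
        congr 1; ext p; ring
    _ = Aμ * ‖z.1‖ ^ 2 + Aν * ‖z.2‖ ^ 2 := by
        rw [integral_add (by exact hfst.add hcross) hsnd, integral_add hfst hcross,
          integral_const_mul, hcross_zero, integral_fun_fst (fun y => ⟪z.1, y⟫ ^ 2),
          integral_fun_snd (fun y => ⟪z.2, y⟫ ^ 2), hμ, hν]
        simp

end TightFrame

theorem stmt10 {N₁ N₂ : ℕ}
    (μ : Measure (EuclideanSpace ℝ (Fin N₁)))
    (ν : Measure (EuclideanSpace ℝ (Fin N₂)))
    [IsProbabilityMeasure μ] [IsProbabilityMeasure ν]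
    (Aμ Aν : ℝ) (hAμ : 0 < Aμ) (hAν : 0 < Aν)
    (hμ : ∀ x : EuclideanSpace ℝ (Fin N₁), ∫ y, ⟪x, y⟫ ^ 2 ∂μ = Aμ * ‖x‖ ^ 2)
    (hν : ∀ x : EuclideanSpace ℝ (Fin N₂), ∫ y, ⟪x, y⟫ ^ 2 ∂ν = Aν * ‖x‖ ^ 2)
    (hmean : (∫ y, y ∂μ) = 0 ∨ (∫ y, y ∂ν) = 0)
    (hmom : (∫ y, ‖y‖ ^ 2 ∂μ) / N₁ = (∫ y, ‖y‖ ^ 2 ∂ν) / N₂) :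
    ∃ A : ℝ, 0 < A ∧
      ∀ z : EuclideanSpace ℝ (Fin N₁) × EuclideanSpace ℝ (Fin N₂),
        ∫ p, (⟪z.1, p.1⟫ + ⟪z.2, p.2⟫) ^ 2 ∂(μ.prod ν) =
          A * (‖z.1‖ ^ 2 + ‖z.2‖ ^ 2) := by
  have hsplit := integral_inner_add_inner_sq_prod hμ hν hAμ hAν hmean
  rcases Nat.eq_zero_or_pos N₁ with hN₁ | hN₁
  · subst hN₁
    refine ⟨Aν, hAν, fun z => ?_⟩
    rw [hsplit, Subsingleton.elim z.1 0]
    simp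
  rcases Nat.eq_zero_or_pos N₂ with hN₂ | hN₂
  · subst hN₂
    refine ⟨Aμ, hAμ, fun z => ?_⟩
    rw [hsplit, Subsingleton.elim z.2 0]
    simp
  have hA : Aμ = Aν := by
    rwa [IsTightFrame.integral_norm_sq hμ hAμ, IsTightFrame.integral_norm_sq hν hAν,
      finrank_euclideanSpace_fin, finrank_euclideanSpace_fin,
      mul_div_cancel_left₀ _ (by positivity), mul_div_cancel_left₀ _ (by positivity)] at hmom
  exact ⟨Aμ, hAμ, fun z => by rw [hsplit, ← hA]; ring⟩
end

section
/- For any probability measure μ on ℝ^N with finite second moment, the probabilistic frame potential PFP(μ) = ∬ ⟨x,y⟩² dμ(x) dμ(y) satisfies PFP(μ) ≥ (1/N) (∫ ‖x‖² dμ(x))², with equality (for μ ≠ δ_0) if and only if μ is a tight probabilistic frame. -/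
/-!
Everything is governed by the second-moment matrix `M i j = ∫ y i * y j ∂μ`: one has
`∫ ‖x‖² = tr M`, `PFP μ = ∑ M i j ²` and `∫ ⟪x, y⟫² dμ(y) = ∑ x i x j M i j`. The identity
`∑ M i j ² - (tr M)² / N = ∑ (M - (tr M / N) • 1) i j ²` gives the bound, with equality exactly
when `M` is a multiple of the identity. By polarization, `μ` is tight with bound `A` exactly when
`M = A • 1`, and `μ ≠ δ₀` forces `tr M > 0`, hence `A = tr M / N > 0`.
-/

open MeasureTheory Finset
open scoped RealInnerProductSpace

namespace Matrix

variable {ι : Type*} [Fintype ι]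

theorem sum_sum_sq_eq_zero_iff (D : Matrix ι ι ℝ) : ∑ i, ∑ j, D i j ^ 2 = 0 ↔ D = 0 := by
  refine ⟨fun h => ext fun i j => ?_, fun h => by simp [h]⟩
  have hi := (sum_eq_zero_iff_of_nonneg fun i _ => sum_nonneg fun j _ => sq_nonneg (D i j)).1 h i
    (mem_univ _)
  exact pow_eq_zero_iff two_ne_zero |>.1 <|
    (sum_eq_zero_iff_of_nonneg fun j _ => sq_nonneg (D i j)).1 hi j (mem_univ _)

variable [DecidableEq ι]

theorem sum_sq_sub_trace_div_card_smul_one (M : Matrix ι ι ℝ) :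
    ∑ i, ∑ j, (M - (M.trace / Fintype.card ι) • 1) i j ^ 2 =
      ∑ i, ∑ j, M i j ^ 2 - M.trace ^ 2 / Fintype.card ι := by
  set c := M.trace / Fintype.card ι
  have hexpand : ∀ i j, (M - c • 1) i j ^ 2 =
      M i j ^ 2 - 2 * c * (if i = j then M i j else 0) + c ^ 2 * (if i = j then 1 else 0) := by
    intro i j
    by_cases h : i = j
    · simp [h]
      ring
    · simp [h]
  simp only [hexpand, sum_add_distrib, sum_sub_distrib, ← mul_sum, sum_ite_eq, mem_univ,
    if_true, sum_const, card_univ, nsmul_eq_mul, mul_one]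
  rw [show ∑ i, M i i = M.trace from rfl]
  rcases eq_or_ne (Fintype.card ι : ℝ) 0 with h | h
  · simp [c, h]
  · simp only [c]
    field_simp
    ring

theorem trace_sq_div_card_le_sum_sq (M : Matrix ι ι ℝ) :
    M.trace ^ 2 / Fintype.card ι ≤ ∑ i, ∑ j, M i j ^ 2 := by
  rw [← sub_nonneg, ← sum_sq_sub_trace_div_card_smul_one]
  positivity

theorem sum_sq_eq_trace_sq_div_card_iff (M : Matrix ι ι ℝ) :
    ∑ i, ∑ j, M i j ^ 2 = M.trace ^ 2 / Fintype.card ι ↔ M = (M.trace / Fintype.card ι) • 1 := by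
  rw [← sub_eq_zero, ← sum_sq_sub_trace_div_card_smul_one, sum_sum_sq_eq_zero_iff, sub_eq_zero]

end Matrix

namespace MeasureTheory

theorem integral_finsetSum_finsetSum {X κ κ' : Type*} [MeasurableSpace X]
    {ν : Measure X} (s : Finset κ) (t : Finset κ') {f : κ → κ' → X → ℝ}
    (hf : ∀ i ∈ s, ∀ j ∈ t, Integrable (f i j) ν) :
    ∫ x, ∑ i ∈ s, ∑ j ∈ t, f i j x ∂ν = ∑ i ∈ s, ∑ j ∈ t, ∫ x, f i j x ∂ν := by
  rw [integral_finsetSum _ fun i hi => integrable_finsetSum _ (hf i hi)]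
  exact sum_congr rfl fun i hi => integral_finsetSum _ (hf i hi)

theorem integral_norm_sq_pos_of_ne_dirac {E : Type*} [NormedAddCommGroup E] [MeasurableSpace E]
    {μ : Measure E} [IsProbabilityMeasure μ] (hmom : Integrable (fun y : E => ‖y‖ ^ 2) μ)
    (hμ : μ ≠ Measure.dirac 0) : 0 < ∫ x, ‖x‖ ^ 2 ∂μ := by
  refine (integral_nonneg fun x => sq_nonneg ‖x‖).lt_of_ne' fun h => hμ ?_
  have hzero : id =ᵐ[μ] fun _ => (0 : E) := by
    filter_upwards [(integral_eq_zero_iff_of_nonneg (fun x => sq_nonneg ‖x‖) hmom).1 h] with x hx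
    simpa using hx
  calc μ = μ.map id := Measure.map_id.symm
    _ = μ.map fun _ => (0 : E) := Measure.map_congr hzero
    _ = Measure.dirac 0 := by simp [Measure.map_const]

section SecondMoment

variable {ι : Type*} [Fintype ι] {μ : Measure (EuclideanSpace ℝ ι)}

noncomputable def secondMomentMatrix (μ : Measure (EuclideanSpace ℝ ι)) : Matrix ι ι ℝ :=
  Matrix.of fun i j => ∫ y, y i * y j ∂μ

theorem real_inner_sq_eq_sum_sum (x y : EuclideanSpace ℝ ι) :
    ⟪x, y⟫ ^ 2 = ∑ i, ∑ j, x i * x j * (y i * y j) := by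
  simp only [PiLp.inner_apply, RCLike.inner_apply, conj_trivial, sq, sum_mul_sum]
  exact sum_congr rfl fun i _ => sum_congr rfl fun j _ => by ring

variable (hmom : Integrable (fun y : EuclideanSpace ℝ ι => ‖y‖ ^ 2) μ)
include hmom

theorem integrable_apply_mul_apply (i j : ι) :
    Integrable (fun y : EuclideanSpace ℝ ι => y i * y j) μ := by
  refine hmom.mono' (by fun_prop) (ae_of_all _ fun y => ?_)
  rw [norm_mul, sq]
  exact mul_le_mul (PiLp.norm_apply_le y i) (PiLp.norm_apply_le y j) (norm_nonneg _)
    (norm_nonneg _)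

theorem integral_real_inner_sq_eq (x : EuclideanSpace ℝ ι) :
    ∫ y, ⟪x, y⟫ ^ 2 ∂μ = ∑ i, ∑ j, x i * x j * secondMomentMatrix μ i j := by
  simp_rw [real_inner_sq_eq_sum_sum x]
  rw [integral_finsetSum_finsetSum _ _ fun i _ j _ =>
    (integrable_apply_mul_apply hmom i j).const_mul _]
  exact sum_congr rfl fun i _ => sum_congr rfl fun j _ => integral_const_mul _ _

theorem integral_norm_sq_eq_trace_secondMomentMatrix :
    ∫ x, ‖x‖ ^ 2 ∂μ = (secondMomentMatrix μ).trace := by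
  simp_rw [← real_inner_self_eq_norm_sq, PiLp.inner_apply, RCLike.inner_apply, conj_trivial]
  exact integral_finsetSum _ fun i _ => integrable_apply_mul_apply hmom i i

theorem integral_integral_real_inner_sq_eq :
    ∫ x, ∫ y, ⟪x, y⟫ ^ 2 ∂μ ∂μ = ∑ i, ∑ j, secondMomentMatrix μ i j ^ 2 := by
  simp_rw [integral_real_inner_sq_eq hmom, secondMomentMatrix, Matrix.of_apply]
  rw [integral_finsetSum_finsetSum _ _ fun i _ j _ =>
    (integrable_apply_mul_apply hmom i j).mul_const _]
  exact sum_congr rfl fun i _ => sum_congr rfl fun j _ => by rw [integral_mul_const, sq]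

theorem integrable_real_inner_sq (u : EuclideanSpace ℝ ι) :
    Integrable (fun y : EuclideanSpace ℝ ι => ⟪u, y⟫ ^ 2) μ := by
  refine (hmom.const_mul (‖u‖ ^ 2)).mono' (by fun_prop) (ae_of_all _ fun y => ?_)
  rw [norm_pow, Real.norm_eq_abs, ← mul_pow]
  exact pow_le_pow_left₀ (abs_nonneg _) (abs_real_inner_le_norm u y) 2

variable [DecidableEq ι]

theorem secondMomentMatrix_eq_smul_one_iff (A : ℝ) :
    secondMomentMatrix μ = A • 1 ↔ ∀ x, ∫ y, ⟪x, y⟫ ^ 2 ∂μ = A * ‖x‖ ^ 2 := by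
  constructor
  · intro h x
    rw [integral_real_inner_sq_eq hmom, h]
    simp only [Matrix.smul_apply, Matrix.one_apply, smul_eq_mul,
      mul_ite, mul_one, mul_zero, sum_ite_eq, mem_univ, if_true, ← real_inner_self_eq_norm_sq,
      PiLp.inner_apply, RCLike.inner_apply, conj_trivial, mul_sum]
    exact sum_congr rfl fun i _ => by ring
  · intro h
    ext i j
    set e := EuclideanSpace.single (𝕜 := ℝ) (ι := ι)
    have hpol : ∀ y : EuclideanSpace ℝ ι,
        y i * y j = (⟪e i 1 + e j 1, y⟫ ^ 2 - ⟪e i 1 - e j 1, y⟫ ^ 2) / 4 := by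
      intro y
      simp only [inner_add_left, inner_sub_left, e, EuclideanSpace.inner_single_left, conj_trivial]
      ring
    simp only [secondMomentMatrix, Matrix.of_apply, hpol]
    rw [integral_div,
      integral_sub (integrable_real_inner_sq hmom _) (integrable_real_inner_sq hmom _), h, h,
      ← mul_sub, norm_add_sq_real, norm_sub_sq_real]
    simp [e, EuclideanSpace.inner_single_left, Matrix.one_apply]
    split_ifs <;> ring

end SecondMoment

end MeasureTheory

theorem stmt16_general {N : ℕ} (μ : Measure (EuclideanSpace ℝ (Fin N)))
    [IsProbabilityMeasure μ]
    (hmom : Integrable (fun y : EuclideanSpace ℝ (Fin N) => ‖y‖ ^ 2) μ) :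
    (1 / (N : ℝ)) * (∫ x, ‖x‖ ^ 2 ∂μ) ^ 2 ≤
      ∫ x, ∫ y, ⟪x, y⟫ ^ 2 ∂μ ∂μ ∧
    (μ ≠ Measure.dirac 0 →
      (∫ x, ∫ y, ⟪x, y⟫ ^ 2 ∂μ ∂μ = (1 / (N : ℝ)) * (∫ x, ‖x‖ ^ 2 ∂μ) ^ 2 ↔
        ∃ A : ℝ, 0 < A ∧ ∀ x : EuclideanSpace ℝ (Fin N),
          ∫ y, ⟪x, y⟫ ^ 2 ∂μ = A * ‖x‖ ^ 2)) := by
  have hT := integral_norm_sq_eq_trace_secondMomentMatrix hmom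
  have hcard : (Fintype.card (Fin N) : ℝ) = N := by rw [Fintype.card_fin]
  rw [integral_integral_real_inner_sq_eq hmom, hT, one_div_mul_eq_div, ← hcard]
  refine ⟨(secondMomentMatrix μ).trace_sq_div_card_le_sum_sq, fun hμ => ?_⟩
  have hT_pos : 0 < (secondMomentMatrix μ).trace := hT ▸ integral_norm_sq_pos_of_ne_dirac hmom hμ
  obtain ⟨i, -, -⟩ := exists_ne_zero_of_sum_ne_zero hT_pos.ne'
  have hN : (0 : ℝ) < Fintype.card (Fin N) := by exact_mod_cast Fintype.card_pos_iff.2 ⟨i⟩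
  rw [Matrix.sum_sq_eq_trace_sq_div_card_iff]
  constructor
  · intro h
    exact ⟨_, div_pos hT_pos hN, (secondMomentMatrix_eq_smul_one_iff hmom _).1 h⟩
  · rintro ⟨A, -, hA⟩
    rw [(secondMomentMatrix_eq_smul_one_iff hmom A).2 hA, Matrix.trace_smul, Matrix.trace_one,
      smul_eq_mul, mul_div_cancel_right₀ _ hN.ne']

theorem stmt16 {N : ℕ} (hN : 0 < N) (μ : Measure (EuclideanSpace ℝ (Fin N)))
    [IsProbabilityMeasure μ]
    (hmom : Integrable (fun y : EuclideanSpace ℝ (Fin N) => ‖y‖ ^ 2) μ) :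
    (1 / (N : ℝ)) * (∫ x, ‖x‖ ^ 2 ∂μ) ^ 2 ≤
      ∫ x, ∫ y, ⟪x, y⟫ ^ 2 ∂μ ∂μ ∧
    (μ ≠ Measure.dirac 0 →
      (∫ x, ∫ y, ⟪x, y⟫ ^ 2 ∂μ ∂μ = (1 / (N : ℝ)) * (∫ x, ‖x‖ ^ 2 ∂μ) ^ 2 ↔
        ∃ A : ℝ, 0 < A ∧ ∀ x : EuclideanSpace ℝ (Fin N),
          ∫ y, ⟪x, y⟫ ^ 2 ∂μ = A * ‖x‖ ^ 2)) :=
  stmt16_general μ hmom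
end
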